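/- No X ⊆ [2, r+1] is good: for every nonempty X ⊆ [2, r+1] (with r ≥ 2, n ≥ 2r), there exists a left-compressed intersecting family 𝒜 ⊆ [n]^(r) with |𝒜(X)| > |𝒮(X)|, where 𝒮 is the star at 1. -/

import Mathlib

/-!
Take `G = [2, r+1]` and the Hilton–Milner family `{G} ∪ 𝒮(G)`. It is intersecting (members
of `𝒮` share `1`, and `G` meets every member of `𝒮(G)`), and it is left-compressed:
compressing `G` can only replace some `j ∈ G` by `1`, landing in `𝒮(G)` because `|G| ≥ 2`.
Every member of `𝒮` meeting `X ⊆ G` meets `G`, so the family's trace on `X` is `𝒮(X)`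
together with the extra set `G`.
-/

open Finset

/-- The ij-compression of a finite set: replace j by i if possible. -/
def comp (i j : ℕ) (A : Finset ℕ) : Finset ℕ :=
  if j ∈ A ∧ i ∉ A then insert i (A.erase j) else A

/-- The ij-compression of a family of sets. -/
def compFam (i j : ℕ) (𝒜 : Finset (Finset ℕ)) : Finset (Finset ℕ) :=
  (𝒜.filter (fun A => comp i j A ∈ 𝒜)) ∪
    ((𝒜.filter (fun A => comp i j A ∉ 𝒜)).image (comp i j))

/-- A family is intersecting if any two members meet. -/
def IsIntersecting (𝒜 : Finset (Finset ℕ)) : Prop :=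
  ∀ A ∈ 𝒜, ∀ B ∈ 𝒜, (A ∩ B).Nonempty

/-- A family is left-compressed if it is invariant under all ij-compressions, i < j. -/
def LeftCompressed (𝒜 : Finset (Finset ℕ)) : Prop :=
  ∀ i j : ℕ, 1 ≤ i → i < j → compFam i j 𝒜 = 𝒜

/-- The compression order: same size and the k-th smallest element of `A` is at most
the k-th smallest element of `B`. -/
def domLE (A B : Finset ℕ) : Prop :=
  A.card = B.card ∧ ∀ (k : ℕ) (a b : ℕ), (A.sort (· ≤ ·))[k]? = some a →
    (B.sort (· ≤ ·))[k]? = some b → a ≤ b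

/-- `A ≺ G` : `A` is generated by `G`, i.e. `|G| ≤ |A|` and the k-th smallest element
of `A` is at most the k-th smallest element of `G` for `k ≤ |G|`. -/
def prec (A G : Finset ℕ) : Prop :=
  G.card ≤ A.card ∧ ∀ (k : ℕ) (a g : ℕ), (A.sort (· ≤ ·))[k]? = some a →
    (G.sort (· ≤ ·))[k]? = some g → a ≤ g

/-- The r-element subsets of [n] = {1, ..., n}. -/
def uniformOn (n r : ℕ) : Finset (Finset ℕ) := (Icc 1 n).powersetCard r

/-- The family ⟨𝒢⟩_r^n generated by 𝒢 under inclusion. -/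
def genSub (r n : ℕ) (𝒢 : Finset (Finset ℕ)) : Finset (Finset ℕ) :=
  (uniformOn n r).filter (fun A => ∃ G ∈ 𝒢, G ⊆ A)

open Classical in
/-- The family ⟨𝒢⟩_r^n generated by 𝒢 under ≺. -/
noncomputable def genP (r n : ℕ) (𝒢 : Finset (Finset ℕ)) : Finset (Finset ℕ) :=
  (uniformOn n r).filter (fun A => ∃ G ∈ 𝒢, prec A G)

/-- ℱ(X) : the members of ℱ meeting X. -/
def hitting (ℱ : Finset (Finset ℕ)) (X : Finset ℕ) : Finset (Finset ℕ) :=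
  ℱ.filter (fun A => (A ∩ X).Nonempty)

/-- The star at 1 in [n]^(r). -/
def star (n r : ℕ) : Finset (Finset ℕ) := (uniformOn n r).filter (fun A => 1 ∈ A)

/-- A maximal left-compressed intersecting subfamily of [n]^(r). -/
def MaxLCI (n r : ℕ) (𝒜 : Finset (Finset ℕ)) : Prop :=
  𝒜 ⊆ uniformOn n r ∧ LeftCompressed 𝒜 ∧ IsIntersecting 𝒜 ∧
    ∀ B ∈ uniformOn n r, B ∉ 𝒜 → ¬ IsIntersecting (insert B 𝒜)

/-- X is good for n and r. -/
def IsGood (n r : ℕ) (X : Finset ℕ) : Prop :=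
  ∀ 𝒜 ⊆ uniformOn n r, LeftCompressed 𝒜 → IsIntersecting 𝒜 →
    (hitting 𝒜 X).card ≤ (hitting (star n r) X).card

section Compression

variable {i j a b n r : ℕ} {A : Finset ℕ}

lemma comp_of_not (h : ¬(j ∈ A ∧ i ∉ A)) : comp i j A = A := if_neg h

lemma comp_of_mem_of_notMem (hj : j ∈ A) (hi : i ∉ A) : comp i j A = insert i (A.erase j) :=
  if_pos ⟨hj, hi⟩

lemma mem_comp_of_mem_of_ne {x : ℕ} (hx : x ∈ A) (hxj : x ≠ j) : x ∈ comp i j A := by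
  by_cases h : j ∈ A ∧ i ∉ A
  · rw [comp_of_mem_of_notMem h.1 h.2]
    exact mem_insert_of_mem (mem_erase.2 ⟨hxj, hx⟩)
  · rwa [comp_of_not h]

lemma card_comp : (comp i j A).card = A.card := by
  by_cases h : j ∈ A ∧ i ∉ A
  · rw [comp_of_mem_of_notMem h.1 h.2, card_insert_of_notMem (by simp [h.2]),
      card_erase_add_one h.1]
  · rw [comp_of_not h]

lemma comp_mem_uniformOn (hi : 1 ≤ i) (hij : i < j) (hA : A ∈ uniformOn n r) :
    comp i j A ∈ uniformOn n r := by
  rw [uniformOn, mem_powersetCard] at hA ⊢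
  refine ⟨?_, card_comp.trans hA.2⟩
  by_cases h : j ∈ A ∧ i ∉ A
  · have hjn : j ≤ n := (mem_Icc.1 (hA.1 h.1)).2
    rw [comp_of_mem_of_notMem h.1 h.2]
    exact insert_subset (mem_Icc.2 ⟨hi, by omega⟩) ((erase_subset j A).trans hA.1)
  · rw [comp_of_not h]
    exact hA.1

lemma comp_inter_Icc_nonempty (hai : a ≤ i) (hij : i < j) (hA : (A ∩ Icc a b).Nonempty) :
    (comp i j A ∩ Icc a b).Nonempty := by
  obtain ⟨x, hx⟩ := hA
  obtain ⟨hxA, hxI⟩ := mem_inter.1 hx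
  by_cases hxj : x = j
  · subst hxj
    by_cases hi : i ∈ A
    · exact ⟨x, mem_inter.2 ⟨by rwa [comp_of_not (fun h => h.2 hi)], hxI⟩⟩
    · rw [comp_of_mem_of_notMem hxA hi]
      have := mem_Icc.1 hxI
      exact ⟨i, mem_inter.2 ⟨mem_insert_self i _, mem_Icc.2 ⟨hai, by omega⟩⟩⟩
  · exact ⟨x, mem_inter.2 ⟨mem_comp_of_mem_of_ne hxA hxj, hxI⟩⟩

lemma compFam_eq_self_of_forall_comp_mem {𝒜 : Finset (Finset ℕ)}
    (h : ∀ A ∈ 𝒜, comp i j A ∈ 𝒜) : compFam i j 𝒜 = 𝒜 := by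
  rw [compFam, filter_true_of_mem h, filter_false_of_mem (fun A hA hn => hn (h A hA))]
  simp

end Compression

section Hitting

variable {ℱ : Finset (Finset ℕ)} {X Y G : Finset ℕ}

lemma hitting_hitting_of_subset (hXY : X ⊆ Y) :
    hitting (hitting ℱ Y) X = hitting ℱ X := by
  ext A
  simp only [hitting, mem_filter, and_congr_left_iff, and_iff_left_iff_imp]
  exact fun hX _ => hX.mono (inter_subset_inter_left hXY)

lemma hitting_insert_of_inter_nonempty (hGX : (G ∩ X).Nonempty) :
    hitting (insert G ℱ) X = insert G (hitting ℱ X) := by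
  simp only [hitting, filter_insert, if_pos hGX]

end Hitting

lemma IsIntersecting.mono {𝒜 ℬ : Finset (Finset ℕ)} (h : IsIntersecting ℬ)
    (h𝒜 : 𝒜 ⊆ ℬ) : IsIntersecting 𝒜 :=
  fun A hA B hB => h A (h𝒜 hA) B (h𝒜 hB)

lemma IsIntersecting.insert {𝒜 : Finset (Finset ℕ)} {G : Finset ℕ} (h : IsIntersecting 𝒜)
    (hG : G.Nonempty) (hG𝒜 : ∀ A ∈ 𝒜, (G ∩ A).Nonempty) : IsIntersecting (insert G 𝒜) := by
  intro A hA B hB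
  rcases mem_insert.1 hA with rfl | hA' <;>
    rcases mem_insert.1 hB with rfl | hB'
  · rwa [inter_self]
  · exact hG𝒜 B hB'
  · rw [inter_comm]; exact hG𝒜 A hA'
  · exact h A hA' B hB'

lemma isIntersecting_star (n r : ℕ) : IsIntersecting (star n r) :=
  fun _ hA _ hB => ⟨1, mem_inter.2 ⟨(mem_filter.1 hA).2, (mem_filter.1 hB).2⟩⟩

lemma leftCompressed_of_forall_comp_mem {𝒜 : Finset (Finset ℕ)}
    (h : ∀ i j, 1 ≤ i → i < j → ∀ A ∈ 𝒜, comp i j A ∈ 𝒜) : LeftCompressed 𝒜 :=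
  fun i j hi hij => compFam_eq_self_of_forall_comp_mem (h i j hi hij)

section HiltonMilner

variable {i j n r : ℕ} {A : Finset ℕ}

lemma comp_mem_hitting_star (hi : 1 ≤ i) (hij : i < j) {b : ℕ}
    (hA : A ∈ hitting (star n r) (Icc 2 b)) : comp i j A ∈ hitting (star n r) (Icc 2 b) := by
  simp only [hitting, _root_.star, mem_filter] at hA ⊢
  obtain ⟨⟨hAu, h1A⟩, hAG⟩ := hA
  by_cases hi1 : i = 1
  · subst hi1
    rw [comp_of_not (fun h => h.2 h1A)]
    exact ⟨⟨hAu, h1A⟩, hAG⟩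
  · exact ⟨⟨comp_mem_uniformOn hi hij hAu, mem_comp_of_mem_of_ne h1A (by omega)⟩,
      comp_inter_Icc_nonempty (by omega) hij hAG⟩

lemma comp_one_Icc_mem_hitting_star {b : ℕ} (hb : 3 ≤ b) (hj : j ∈ Icc 2 b)
    (hG : Icc 2 b ∈ uniformOn n r) : comp 1 j (Icc 2 b) ∈ hitting (star n r) (Icc 2 b) := by
  have hj' := mem_Icc.1 hj
  have h1 : (1 : ℕ) ∉ Icc 2 b := by simp
  obtain ⟨x, hxG, hxj⟩ : ∃ x ∈ Icc 2 b, x ≠ j :=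
    if hj2 : j = 2 then ⟨3, by simp; omega, by omega⟩ else ⟨2, by simp; omega, by omega⟩
  refine mem_filter.2 ⟨mem_filter.2 ⟨comp_mem_uniformOn le_rfl (by omega) hG, ?_⟩,
    ⟨x, mem_inter.2 ⟨mem_comp_of_mem_of_ne hxG hxj, hxG⟩⟩⟩
  rw [comp_of_mem_of_notMem hj h1]
  exact mem_insert_self 1 _

def hiltonMilner (n r : ℕ) : Finset (Finset ℕ) :=
  insert (Icc 2 (r + 1)) (hitting (star n r) (Icc 2 (r + 1)))

lemma Icc_two_mem_uniformOn (h : r + 1 ≤ n) : Icc 2 (r + 1) ∈ uniformOn n r := by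
  rw [uniformOn, mem_powersetCard, Nat.card_Icc]
  exact ⟨Icc_subset_Icc (by omega) h, by omega⟩

lemma Icc_two_notMem_star : Icc 2 (r + 1) ∉ star n r := by
  simp [_root_.star]

lemma hiltonMilner_subset_uniformOn (h : r + 1 ≤ n) : hiltonMilner n r ⊆ uniformOn n r :=
  insert_subset (Icc_two_mem_uniformOn h) ((filter_subset _ _).trans (filter_subset _ _))

lemma isIntersecting_hiltonMilner (hr : 1 ≤ r) : IsIntersecting (hiltonMilner n r) :=
  ((isIntersecting_star n r).mono (filter_subset _ _)).insert (nonempty_Icc.2 (by omega))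
    fun _ hA => by rw [inter_comm]; exact (mem_filter.1 hA).2

lemma leftCompressed_hiltonMilner (hr : 2 ≤ r) (h : r + 1 ≤ n) :
    LeftCompressed (hiltonMilner n r) := by
  refine leftCompressed_of_forall_comp_mem fun i j hi hij A hA => ?_
  rcases mem_insert.1 hA with rfl | hA
  · by_cases hc : j ∈ Icc 2 (r + 1) ∧ i ∉ Icc 2 (r + 1)
    · obtain rfl : i = 1 := by simp only [mem_Icc] at hc; omega
      exact mem_insert_of_mem
        (comp_one_Icc_mem_hitting_star (by omega) hc.1 (Icc_two_mem_uniformOn h))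
    · rw [comp_of_not hc]
      exact mem_insert_self _ _
  · exact mem_insert_of_mem (comp_mem_hitting_star hi hij hA)

lemma card_hitting_hiltonMilner {X : Finset ℕ} (hX : X ⊆ Icc 2 (r + 1)) (hXne : X.Nonempty) :
    (hitting (hiltonMilner n r) X).card = (hitting (star n r) X).card + 1 := by
  have hGX : (Icc 2 (r + 1) ∩ X).Nonempty := by rwa [inter_eq_right.2 hX]
  rw [hiltonMilner, hitting_insert_of_inter_nonempty hGX, hitting_hitting_of_subset hX,
    card_insert_of_notMem (s := hitting (star n r) X)
      fun h => Icc_two_notMem_star (filter_subset _ _ h)]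

end HiltonMilner

theorem stmt12 (n r : ℕ) (hr : 2 ≤ r) (hn : 2 * r ≤ n) (X : Finset ℕ)
    (hX : X ⊆ Icc 2 (r + 1)) (hXne : X.Nonempty) :
    ∃ 𝒜 : Finset (Finset ℕ), 𝒜 ⊆ uniformOn n r ∧ LeftCompressed 𝒜 ∧
      IsIntersecting 𝒜 ∧ (hitting (star n r) X).card < (hitting 𝒜 X).card := by
  refine ⟨hiltonMilner n r, hiltonMilner_subset_uniformOn (by omega),
    leftCompressed_hiltonMilner hr (by omega), isIntersecting_hiltonMilner (by omega), ?_⟩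
  rw [card_hitting_hiltonMilner hX hXne]
  exact Nat.lt_succ_self _
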